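/- arXiv:1112.4632 — 2 statements merged into one kernel-verified Lean document; each statement's English description precedes it below -/
import Mathlib

section
/- In the Reingold-Tarjan line graph RT^k, the perfect matching M = {(x_{2i}, x_{2i+1}) : 1 <= i < 2^{k-1}} ∪ {(x_1, x_{2^k})} is stable: for every pair of vertices (u,v) not matched to each other in M, w(u,v) >= min{w(u,M(u)), w(v,M(v))}. -/
/-- Positions of the points of the Reingold-Tarjan line graph `RT^{j+1}`
(on `2^(j+1)` points, indexed `0, …, 2^(j+1) - 1`). -/
noncomputable def RTpt : ℕ → ℕ → ℝ
  | 0, i => if i = 0 then 0 else 1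
  | j+1, i =>
      if i < 2^(j+1) then RTpt j i
      else RTpt j (i - 2^(j+1)) + 2 * RTpt j (2^(j+1) - 1)

/-- The "shifted" matching on `m` points (0-indexed): point `0` is matched to
point `m - 1`, and otherwise odd points `i` are matched to `i + 1` and even
points `i` to `i - 1` (i.e., the edges `(x_{2i}, x_{2i+1})` in 1-indexed
notation, plus the wrap-around edge `(x_1, x_m)`). -/
def Mshift (m i : ℕ) : ℕ :=
  if i = 0 then m - 1
  else if i = m - 1 then 0
  else if i % 2 = 1 then i + 1 else i - 1

lemma RTpt_base (i : ℕ) : RTpt 0 i = if i = 0 then 0 else 1 := rfl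

lemma RTpt_succ (j i : ℕ) : RTpt (j+1) i =
    if i < 2^(j+1) then RTpt j i
    else RTpt j (i - 2^(j+1)) + 2 * RTpt j (2^(j+1) - 1) := rfl

lemma RTpt_nonneg (j : ℕ) : ∀ i, 0 ≤ RTpt j i := by
  induction j with
  | zero => intro i; rw [RTpt_base]; split <;> norm_num
  | succ j ih =>
    intro i
    rw [RTpt_succ]
    split
    · exact ih i
    · have h1 := ih (i - 2^(j+1))
      have h2 := ih (2^(j+1) - 1)
      linarith

lemma RTpt_top (j : ℕ) : RTpt j (2^(j+1) - 1) = 3^j := by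
  induction j with
  | zero => norm_num [RTpt_base]
  | succ j ih =>
    have hp : (2:ℕ)^(j+1+1) = 2*2^(j+1) := by ring
    have h0 : 0 < (2:ℕ)^(j+1) := by positivity
    rw [RTpt_succ, if_neg (by omega)]
    have h : 2^(j+1+1) - 1 - 2^(j+1) = 2^(j+1) - 1 := by omega
    rw [h, ih]
    ring

lemma RTpt_zeroPt (j : ℕ) : RTpt j 0 = 0 := by
  induction j with
  | zero => rw [RTpt_base]; simp
  | succ j ih =>
    have h0 : 0 < (2:ℕ)^(j+1) := by positivity
    rw [RTpt_succ, if_pos h0]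
    exact ih

lemma RTpt_low (j i : ℕ) (h : i < 2^(j+1)) : RTpt (j+1) i = RTpt j i := by
  rw [RTpt_succ, if_pos h]

lemma RTpt_high (j i : ℕ) (h : 2^(j+1) ≤ i) :
    RTpt (j+1) i = RTpt j (i - 2^(j+1)) + 2 * 3^j := by
  rw [RTpt_succ, if_neg (not_lt.2 h), RTpt_top]

lemma RTpt_mono (j : ℕ) : ∀ i i', i ≤ i' → i' < 2^(j+1) → RTpt j i ≤ RTpt j i' := by
  induction j with
  | zero =>
    intro i i' h h'
    rw [RTpt_base, RTpt_base]
    split_ifs <;> norm_num <;> omega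
  | succ j ih =>
    intro i i' h h'
    have hp : (2:ℕ)^(j+1+1) = 2*2^(j+1) := by ring
    have h0 : 0 < (2:ℕ)^(j+1) := by positivity
    by_cases h1 : i' < 2^(j+1)
    · rw [RTpt_low j i (by omega), RTpt_low j i' h1]
      exact ih _ _ h h1
    · by_cases h2 : i < 2^(j+1)
      · rw [RTpt_low j i h2, RTpt_high j i' (by omega)]
        have ha : RTpt j i ≤ 3^j := by
          have := ih i (2^(j+1)-1) (by omega) (by omega)
          rwa [RTpt_top] at this
        have hb := RTpt_nonneg j (i' - 2^(j+1))
        have hc : (0:ℝ) ≤ 3^j := by positivity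
        linarith
      · rw [RTpt_high j i (by omega), RTpt_high j i' (by omega)]
        have := ih (i - 2^(j+1)) (i' - 2^(j+1)) (by omega) (by omega)
        linarith

lemma RT_L2 (j : ℕ) : ∀ v, v % 2 = 1 → v + 1 < 2^(j+1) → RTpt j (v+1) ≤ 2 * RTpt j v := by
  induction j with
  | zero =>
    intro v h1 h2
    exfalso; norm_num at h2; omega
  | succ j ih =>
    intro v h1 h2
    have hp : (2:ℕ)^(j+1+1) = 2*2^(j+1) := by ring
    have h0 : 0 < (2:ℕ)^(j+1) := by positivity
    have h3j : (0:ℝ) ≤ 3^j := by positivity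
    rcases lt_trichotomy (v+1) (2^(j+1)) with hc | hc | hc
    · rw [RTpt_low j (v+1) hc, RTpt_low j v (by omega)]
      exact ih v h1 hc
    · have hv : v = 2^(j+1) - 1 := by omega
      rw [RTpt_high j (v+1) (by omega), RTpt_low j v (by omega)]
      have e0 : v + 1 - 2^(j+1) = 0 := by omega
      rw [e0, RTpt_zeroPt, hv, RTpt_top]
      linarith
    · rw [RTpt_high j (v+1) (by omega), RTpt_high j v (by omega)]
      have e1 : v + 1 - 2^(j+1) = (v - 2^(j+1)) + 1 := by omega
      rw [e1]
      have := ih (v - 2^(j+1)) (by omega) (by omega)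
      linarith

lemma RT_L3 (j : ℕ) : ∀ u, u % 2 = 0 → 2 ≤ u → u < 2^(j+1) →
    2 * RTpt j u ≤ 3^j + RTpt j (u-1) := by
  induction j with
  | zero =>
    intro u h1 h2 h3
    exfalso; norm_num at h3; omega
  | succ j ih =>
    intro u h1 h2 h3
    have hp : (2:ℕ)^(j+1+1) = 2*2^(j+1) := by ring
    have h0 : 0 < (2:ℕ)^(j+1) := by positivity
    have hp3 : (3:ℝ)^(j+1) = 3*3^j := by ring
    have h3j : (0:ℝ) ≤ 3^j := by positivity
    rcases lt_trichotomy u (2^(j+1)) with hc | hc | hc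
    · rw [RTpt_low j u hc, RTpt_low j (u-1) (by omega)]
      have := ih u h1 h2 hc
      linarith
    · rw [RTpt_high j u (by omega), RTpt_low j (u-1) (by omega)]
      have e0 : u - 2^(j+1) = 0 := by omega
      have e1 : u - 1 = 2^(j+1) - 1 := by omega
      rw [e0, e1, RTpt_zeroPt, RTpt_top, hp3]
      linarith
    · rw [RTpt_high j u (by omega), RTpt_high j (u-1) (by omega)]
      have e1 : u - 1 - 2^(j+1) = (u - 2^(j+1)) - 1 := by omega
      rw [e1]
      have := ih (u - 2^(j+1)) (by omega) (by omega) (by omega)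
      rw [hp3]
      linarith

lemma RT_L4 (j : ℕ) : ∀ u v, u % 2 = 0 → 2 ≤ u → v % 2 = 1 → u < v → v + 1 < 2^(j+1) →
    min (RTpt j u - RTpt j (u-1)) (RTpt j (v+1) - RTpt j v) ≤ RTpt j v - RTpt j u := by
  induction j with
  | zero =>
    intro u v h1 h2 h3 h4 h5
    exfalso; norm_num at h5; omega
  | succ j ih =>
    intro u v h1 h2 h3 h4 h5
    have hp : (2:ℕ)^(j+1+1) = 2*2^(j+1) := by ring
    have h0 : 0 < (2:ℕ)^(j+1) := by positivity
    have h3j : (0:ℝ) ≤ 3^j := by positivity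
    rw [min_le_iff]
    rcases lt_trichotomy (v+1) (2^(j+1)) with hc | hc | hc
    · rw [RTpt_low j u (by omega), RTpt_low j (u-1) (by omega),
        RTpt_low j (v+1) hc, RTpt_low j v (by omega)]
      have := ih u v h1 h2 h3 h4 hc
      rwa [min_le_iff] at this
    · -- v = 2^(j+1) - 1
      left
      rw [RTpt_low j u (by omega), RTpt_low j (u-1) (by omega), RTpt_low j v (by omega)]
      have hv : v = 2^(j+1) - 1 := by omega
      have key := RT_L3 j u h1 h2 (by omega)
      rw [hv, RTpt_top]
      linarith
    · -- v ≥ 2^(j+1)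
      rcases lt_trichotomy u (2^(j+1)) with hd | hd | hd
      · left
        rw [RTpt_low j u hd, RTpt_low j (u-1) (by omega), RTpt_high j v (by omega)]
        have key := RT_L3 j u h1 h2 hd
        have hb := RTpt_nonneg j (v - 2^(j+1))
        linarith
      · right
        rw [RTpt_high j u (by omega), RTpt_high j v (by omega),
          RTpt_high j (v+1) (by omega)]
        have e0 : u - 2^(j+1) = 0 := by omega
        have e1 : v + 1 - 2^(j+1) = (v - 2^(j+1)) + 1 := by omega
        rw [e0, e1, RTpt_zeroPt]
        have key := RT_L2 j (v - 2^(j+1)) (by omega) (by omega)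
        linarith
      · rw [RTpt_high j u (by omega), RTpt_high j (u-1) (by omega),
          RTpt_high j v (by omega), RTpt_high j (v+1) (by omega)]
        have e1 : u - 1 - 2^(j+1) = (u - 2^(j+1)) - 1 := by omega
        have e2 : v + 1 - 2^(j+1) = (v - 2^(j+1)) + 1 := by omega
        rw [e1, e2]
        have key := ih (u - 2^(j+1)) (v - 2^(j+1)) (by omega) (by omega) (by omega)
          (by omega) (by omega)
        rw [min_le_iff] at key
        rcases key with h | h
        · left; linarith
        · right; linarith

lemma RT_helper (j u v : ℕ) (hv : v < 2^(j+1)) (hlt : u < v)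
    (hnm : Mshift (2^(j+1)) u ≠ v) :
    min |RTpt j u - RTpt j (Mshift (2^(j+1)) u)|
        |RTpt j v - RTpt j (Mshift (2^(j+1)) v)| ≤ RTpt j v - RTpt j u := by
  have hp2 : (2:ℕ)^(j+1) = 2*2^j := by ring
  have h0 : 0 < (2:ℕ)^j := by positivity
  rw [min_le_iff]
  by_cases hu2 : u % 2 = 1
  · -- u odd : matched to u+1 ≤ v
    left
    have hM : Mshift (2^(j+1)) u = u + 1 := by unfold Mshift; split_ifs <;> omega
    rw [hM]
    have m1 : RTpt j u ≤ RTpt j (u+1) := RTpt_mono j u (u+1) (by omega) (by omega)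
    have m2 : RTpt j (u+1) ≤ RTpt j v := RTpt_mono j (u+1) v (by omega) hv
    rw [abs_sub_comm, abs_of_nonneg (by linarith)]
    linarith
  · have hu0 : u % 2 = 0 := by omega
    by_cases hv2 : v % 2 = 0
    · -- v even : matched to v-1 ≥ u
      right
      have hM : Mshift (2^(j+1)) v = v - 1 := by unfold Mshift; split_ifs <;> omega
      rw [hM]
      have m1 : RTpt j (v-1) ≤ RTpt j v := RTpt_mono j (v-1) v (by omega) hv
      have m2 : RTpt j u ≤ RTpt j (v-1) := RTpt_mono j u (v-1) (by omega) (by omega)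
      rw [abs_of_nonneg (by linarith)]
      linarith
    · have hv1 : v % 2 = 1 := by omega
      by_cases hvt : v = 2^(j+1) - 1
      · by_cases hu0' : u = 0
        · exact absurd (by unfold Mshift; split_ifs <;> omega : Mshift (2^(j+1)) u = v) hnm
        · left
          have hu2' : 2 ≤ u := by omega
          have hM : Mshift (2^(j+1)) u = u - 1 := by unfold Mshift; split_ifs <;> omega
          rw [hM]
          have m2 : RTpt j (u-1) ≤ RTpt j u := RTpt_mono j (u-1) u (by omega) (by omega)
          rw [abs_of_nonneg (by linarith)]
          have key := RT_L3 j u hu0 hu2' (by omega)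
          have hvv : RTpt j v = 3^j := by rw [hvt]; exact RTpt_top j
          linarith
      · have hv5 : v + 1 < 2^(j+1) := by omega
        have hMv : Mshift (2^(j+1)) v = v + 1 := by unfold Mshift; split_ifs <;> omega
        by_cases hu0' : u = 0
        · right
          rw [hMv]
          have m1 : RTpt j v ≤ RTpt j (v+1) := RTpt_mono j v (v+1) (by omega) hv5
          rw [abs_sub_comm, abs_of_nonneg (by linarith)]
          have key := RT_L2 j v hv1 hv5
          have hz : RTpt j u = 0 := by rw [hu0']; exact RTpt_zeroPt j
          linarith
        · have hu2' : 2 ≤ u := by omega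
          have hMu : Mshift (2^(j+1)) u = u - 1 := by unfold Mshift; split_ifs <;> omega
          rw [hMu, hMv]
          have key := RT_L4 j u v hu0 hu2' hv1 hlt hv5
          rw [min_le_iff] at key
          have m2 : RTpt j (u-1) ≤ RTpt j u := RTpt_mono j (u-1) u (by omega) (by omega)
          have m1 : RTpt j v ≤ RTpt j (v+1) := RTpt_mono j v (v+1) (by omega) hv5
          rcases key with h | h
          · left; rw [abs_of_nonneg (by linarith)]; linarith
          · right; rw [abs_sub_comm, abs_of_nonneg (by linarith)]; linarith

lemma Mshift_invol (m u v : ℕ) (hm : m % 2 = 0) (h2 : 2 ≤ m) (hv : v < m)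
    (h : Mshift m v = u) : Mshift m u = v := by
  unfold Mshift at h ⊢
  split_ifs at h ⊢ <;> omega

/-- in `RT^k`, the shifted perfect matching `M` is stable: for
every pair of vertices not matched to each other,
`w(u,v) ≥ min (w(u, M u)) (w(v, M v))`, where `w(u,v) = |x_u - x_v|`. -/
theorem stmt_6 (k : ℕ) (hk : 1 ≤ k) (u v : ℕ)
    (hu : u < 2^k) (hv : v < 2^k) (huv : u ≠ v)
    (hnm : Mshift (2^k) u ≠ v) :
    ¬ (|RTpt (k-1) u - RTpt (k-1) v| <
        min |RTpt (k-1) u - RTpt (k-1) (Mshift (2^k) u)|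
            |RTpt (k-1) v - RTpt (k-1) (Mshift (2^k) v)|) := by
  obtain ⟨j, rfl⟩ : ∃ j, k = j + 1 := ⟨k - 1, by omega⟩
  simp only [Nat.add_sub_cancel]
  rw [not_lt]
  have hp2 : (2:ℕ)^(j+1) = 2*2^j := by ring
  have h0 : 0 < (2:ℕ)^j := by positivity
  rcases lt_trichotomy u v with h | h | h
  · have key := RT_helper j u v hv h hnm
    rw [abs_sub_comm (RTpt j u) (RTpt j v)]
    exact key.trans (le_abs_self _)
  · exact absurd h huv
  · have hnm' : Mshift (2^(j+1)) v ≠ u := by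
      intro hcon
      exact hnm (Mshift_invol (2^(j+1)) u v (by omega) (by omega) hv hcon)
    have key := RT_helper j v u hu h hnm'
    rw [min_comm]
    exact key.trans (le_abs_self _)
end

section
/- Let T be an n-leaf complete wb-balanced full binary tree with alpha >= 1, where wb follows the recursion wb(x) = wb(y)+wb(z)+(1/alpha)*min{wb(y),wb(z)} and complete means all leaves are at depth h or h-1 with h = ceil(log2 n) and k = 2^h - n leaves at depth h-1 (and 2^h - 2k leaves at depth h). Then the effect eff(T) = wb(root) / (sum of wb over leaves) equals (2 + 1/alpha)^h / (2^h + k/alpha). -/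
/-- Full binary trees with real weights at the leaves. -/
inductive FBT where
  | leaf : ℝ → FBT
  | node : FBT → FBT → FBT

/-- The virtual weight `wb`: on a leaf it is the leaf's weight, and on an
internal node with children `y, z` it is
`wb y + wb z + (1/a) * min (wb y) (wb z)`. -/
noncomputable def wb (a : ℝ) : FBT → ℝ
  | .leaf x => x
  | .node l r => wb a l + wb a r + (1/a) * min (wb a l) (wb a r)

/-- The list of leaves of a tree, each recorded together with its light depth:
the number of light links (links from a child of smaller `wb`-value to its
parent, ties going to the left child) on the path from the leaf to the root. -/
noncomputable def leafData (a : ℝ) : FBT → List (ℕ × ℝ)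
  | .leaf x => [(0, x)]
  | .node l r =>
      if wb a l ≤ wb a r then
        ((leafData a l).map fun p => (p.1 + 1, p.2)) ++ leafData a r
      else
        leafData a l ++ ((leafData a r).map fun p => (p.1 + 1, p.2))

/-- All leaf weights are nonnegative. -/
def leavesNonneg : FBT → Prop
  | .leaf x => 0 ≤ x
  | .node l r => leavesNonneg l ∧ leavesNonneg r

/-- A tree is `wb`-balanced if every two sibling nodes have equal `wb`-value. -/
def balancedFBT (a : ℝ) : FBT → Prop
  | .leaf _ => True
  | .node l r => wb a l = wb a r ∧ balancedFBT a l ∧ balancedFBT a r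

/-- Number of leaves. -/
def numLeaves : FBT → ℕ
  | .leaf _ => 1
  | .node l r => numLeaves l + numLeaves r

/-- Height of the tree. -/
def heightFBT : FBT → ℕ
  | .leaf _ => 0
  | .node l r => max (heightFBT l) (heightFBT r) + 1

/-- The list of depths of the leaves. -/
def leafDepths : FBT → List ℕ
  | .leaf _ => [0]
  | .node l r => (leafDepths l ++ leafDepths r).map (· + 1)

/-- Sum of the leaf weights. -/
def leafSum : FBT → ℝ
  | .leaf x => x
  | .node l r => leafSum l + leafSum r

/-- A full binary tree is complete if every leaf is at depth `h(T)` or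
`h(T) - 1`. -/
def completeFBT (t : FBT) : Prop :=
  ∀ d ∈ leafDepths t, d = heightFBT t ∨ d + 1 = heightFBT t

lemma wb_nonneg (a : ℝ) (ha : 0 < a) (t : FBT) (h : leavesNonneg t) : 0 ≤ wb a t := by
  induction t with
  | leaf x => exact h
  | node l r ihl ihr =>
    obtain ⟨hl, hr⟩ := h
    have h1 := ihl hl; have h2 := ihr hr
    have hm : 0 ≤ min (wb a l) (wb a r) := le_min h1 h2
    have h3 : 0 ≤ 1/a := by positivity
    simp only [wb]; nlinarith

lemma leafSum_le_wb (a : ℝ) (ha : 0 < a) (t : FBT) (h : leavesNonneg t) :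
    leafSum t ≤ wb a t := by
  induction t with
  | leaf x => exact le_rfl
  | node l r ihl ihr =>
    obtain ⟨hl, hr⟩ := h
    have h1 := ihl hl; have h2 := ihr hr
    have hm : 0 ≤ min (wb a l) (wb a r) :=
      le_min (wb_nonneg a ha l hl) (wb_nonneg a ha r hr)
    have h3 : 0 ≤ 1/a := by positivity
    simp only [wb, leafSum]; nlinarith

lemma mem_le_height (t : FBT) : ∀ d ∈ leafDepths t, d ≤ heightFBT t := by
  induction t with
  | leaf x => intro d hd; simp [leafDepths] at hd; simp [hd, heightFBT]
  | node l r ihl ihr =>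
    intro d hd
    simp only [leafDepths, List.mem_map, List.mem_append] at hd
    obtain ⟨e, he, rfl⟩ := hd
    simp only [heightFBT]
    rcases he with he | he
    · exact Nat.add_le_add_right ((ihl e he).trans (le_max_left _ _)) 1
    · exact Nat.add_le_add_right ((ihr e he).trans (le_max_right _ _)) 1

lemma height_mem (t : FBT) : heightFBT t ∈ leafDepths t := by
  induction t with
  | leaf x => simp [leafDepths, heightFBT]
  | node l r ihl ihr =>
    simp only [leafDepths, heightFBT, List.mem_map, List.mem_append]
    rcases le_total (heightFBT l) (heightFBT r) with h | h
    · exact ⟨heightFBT r, Or.inr ihr, by omega⟩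
    · exact ⟨heightFBT l, Or.inl ihl, by omega⟩

lemma length_leafDepths (t : FBT) : (leafDepths t).length = numLeaves t := by
  induction t with
  | leaf x => rfl
  | node l r ihl ihr => simp [leafDepths, numLeaves, ihl, ihr]

lemma kraft (t : FBT) : ((leafDepths t).map fun d => ((2:ℝ)^d)⁻¹).sum = 1 := by
  induction t with
  | leaf x => simp [leafDepths]
  | node l r ihl ihr =>
    simp only [leafDepths, List.map_map, List.map_append, List.sum_append]
    have h : ∀ u : FBT,
        ((leafDepths u).map ((fun d => ((2:ℝ)^d)⁻¹) ∘ (· + 1))).sum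
          = 2⁻¹ * ((leafDepths u).map fun d => ((2:ℝ)^d)⁻¹).sum := by
      intro u
      rw [← List.sum_map_mul_left]
      congr 1
      ext d
      simp [Function.comp, pow_succ, mul_inv, mul_comm]
    rw [h l, h r, ihl, ihr]; norm_num

lemma key_sum (a : ℝ) (ha : 0 < a) (t : FBT) (hbal : balancedFBT a t) :
    leafSum t = wb a t * ((leafDepths t).map fun d => ((2 + 1/a)^d)⁻¹).sum := by
  have hc : (0:ℝ) < 2 + 1/a := by positivity
  induction t with
  | leaf x => simp [leafDepths, leafSum, wb]
  | node l r ihl ihr =>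
    obtain ⟨heq, hbl, hbr⟩ := hbal
    simp only [leafDepths, List.map_map, List.map_append, List.sum_append, leafSum, wb]
    have h : ∀ u : FBT,
        ((leafDepths u).map ((fun d => ((2 + 1/a:ℝ)^d)⁻¹) ∘ (· + 1))).sum
          = (2 + 1/a)⁻¹ * ((leafDepths u).map fun d => ((2 + 1/a:ℝ)^d)⁻¹).sum := by
      intro u
      rw [← List.sum_map_mul_left]
      congr 1
      ext d
      simp [Function.comp, pow_succ, mul_inv, mul_comm]
    rw [h l, h r, ihl hbl, ihr hbr, heq, min_self]
    field_simp
    ring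

lemma count_sum (u v : ℕ) (f : ℕ → ℝ) :
    ∀ L : List ℕ, u ≠ v → (∀ d ∈ L, d = u ∨ d = v) →
      (L.map f).sum = (L.count u) * f u + (L.count v) * f v := by
  intro L
  induction L with
  | nil => intro _ _; simp
  | cons x L ih =>
    intro huv hmem
    have hx := hmem x (by simp)
    have hrest : ∀ d ∈ L, d = u ∨ d = v := fun d hd => hmem d (by simp [hd])
    rcases hx with rfl | rfl
    · rw [List.map_cons, List.sum_cons, ih huv hrest, List.count_cons_self,
        List.count_cons_of_ne huv]
      push_cast; ring
    · rw [List.map_cons, List.sum_cons, ih huv hrest, List.count_cons_self,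
        List.count_cons_of_ne (Ne.symm huv)]
      push_cast; ring

lemma count_length (u v : ℕ) :
    ∀ L : List ℕ, u ≠ v → (∀ d ∈ L, d = u ∨ d = v) →
      L.length = L.count u + L.count v := by
  intro L
  induction L with
  | nil => intro _ _; simp
  | cons x L ih =>
    intro huv hmem
    have hx := hmem x (by simp)
    have hrest : ∀ d ∈ L, d = u ∨ d = v := fun d hd => hmem d (by simp [hd])
    rcases hx with rfl | rfl
    · rw [List.length_cons, ih huv hrest, List.count_cons_self,
        List.count_cons_of_ne huv]
      omega
    · rw [List.length_cons, ih huv hrest, List.count_cons_self,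
        List.count_cons_of_ne (Ne.symm huv)]
      omega

lemma height_zero (t : FBT) (h : heightFBT t = 0) : ∃ x, t = .leaf x := by
  cases t with
  | leaf x => exact ⟨x, rfl⟩
  | node l r => simp [heightFBT] at h

/-- the effect `wb(root) / (sum of leaf weights)` of an `n`-leaf
complete `wb`-balanced full binary tree equals `(2 + 1/a)^h / (2^h + k/a)`,
where `h = ⌈log₂ n⌉` and `k = 2^h - n`. -/
theorem stmt_15 (a : ℝ) (ha : 1 ≤ a) (t : FBT)
    (hbal : balancedFBT a t) (hcomp : completeFBT t)
    (hnn : leavesNonneg t) (hpos : 0 < leafSum t) :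
    wb a t / leafSum t =
      (2 + 1/a)^(Nat.clog 2 (numLeaves t)) /
        ((2^(Nat.clog 2 (numLeaves t)) : ℝ) +
          ((2^(Nat.clog 2 (numLeaves t)) - numLeaves t : ℕ) : ℝ) / a) := by
  have ha0 : (0:ℝ) < a := lt_of_lt_of_le one_pos ha
  have hc : (0:ℝ) < 2 + 1/a := by positivity
  rcases Nat.eq_zero_or_pos (heightFBT t) with h0 | hge1
  · obtain ⟨x, rfl⟩ := height_zero t h0
    have hx : 0 < x := hpos
    simp only [numLeaves, Nat.clog_one_right, pow_zero, wb, leafSum]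
    rw [div_self hx.ne']
    norm_num
  · obtain ⟨H, hH⟩ : ∃ H, heightFBT t = H + 1 := ⟨heightFBT t - 1, by omega⟩
    set n := numLeaves t with hn
    have hmem : ∀ d ∈ leafDepths t, d = H + 1 ∨ d = H := by
      intro d hd
      rcases hcomp d hd with h1 | h1 <;> omega
    have huv : H + 1 ≠ H := by omega
    set m := (leafDepths t).count (H + 1) with hm
    set k := (leafDepths t).count H with hk
    have hm1 : 1 ≤ m := List.count_pos_iff.mpr (hH ▸ height_mem t)
    have hlen : n = m + k := by
      rw [hn, ← length_leafDepths t,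
        count_length (H+1) H (leafDepths t) huv hmem]
    have hkraft : (m:ℝ) * ((2:ℝ)^(H+1))⁻¹ + (k:ℝ) * ((2:ℝ)^H)⁻¹ = 1 := by
      rw [← count_sum (H+1) H (fun d => ((2:ℝ)^d)⁻¹) (leafDepths t) huv hmem]
      exact kraft t
    have hmk : (m:ℝ) + 2*(k:ℝ) = 2^(H+1) := by
      have h2 : ((2:ℝ)^(H+1)) ≠ 0 := by positivity
      have h2' : ((2:ℝ)^H) ≠ 0 := by positivity
      field_simp at hkraft
      have h3 : ((m:ℝ) + 2*(k:ℝ)) * 2^H = 2^(H+1) * 2^H := by linear_combination hkraft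
      exact mul_right_cancel₀ h2' h3
    have hmkn : m + 2*k = 2^(H+1) := by exact_mod_cast hmk
    have hnle : n ≤ 2^(H+1) := hmkn ▸ (by omega : n ≤ m + 2*k)
    have hltn : 2^H < n := by
      have h2 : 2*2^H < 2*n := by
        rw [← pow_succ']
        exact hmkn ▸ (by omega : m + 2*k < 2*n)
      exact Nat.lt_of_mul_lt_mul_left h2
    have hclog : Nat.clog 2 n = H + 1 := by
      have h1 : Nat.clog 2 n ≤ H + 1 := (Nat.clog_le_iff_le_pow one_lt_two).mpr hnle
      have h2 : ¬ Nat.clog 2 n ≤ H := fun hcon =>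
        absurd ((Nat.clog_le_iff_le_pow one_lt_two).mp hcon) (Nat.not_le.mpr hltn)
      exact Nat.le_antisymm h1 (Nat.not_le.mp h2)
    have hkn : 2^(H+1) - n = k := by rw [← hmkn]; omega
    rw [hclog, hkn]
    have hsum : ((leafDepths t).map fun d => ((2 + 1/a)^d)⁻¹).sum
        = (m:ℝ) * ((2+1/a)^(H+1))⁻¹ + (k:ℝ) * ((2+1/a)^H)⁻¹ :=
      count_sum (H+1) H (fun d => ((2+1/a:ℝ)^d)⁻¹) (leafDepths t) huv hmem
    have hW : 0 < wb a t := lt_of_lt_of_le hpos (leafSum_le_wb a ha0 t hnn)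
    have hmr : (m:ℝ) = 2^(H+1) - 2*(k:ℝ) := by linarith
    have hkey := key_sum a ha0 t hbal
    rw [hsum, hmr] at hkey
    rw [hkey]
    have hkpos : (0:ℝ) ≤ (k:ℝ) := Nat.cast_nonneg k
    have hden : (0:ℝ) < 2^(H+1) + (k:ℝ)/a := by positivity
    have hc2 : ((2:ℝ)+1/a) ≠ 0 := hc.ne'
    have ha' : a ≠ 0 := ha0.ne'
    have hApos : (0:ℝ) < (2^(H+1) - 2*(k:ℝ)) * ((2+1/a)^(H+1))⁻¹ + (k:ℝ) * ((2+1/a)^H)⁻¹ := by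
      have := hkey ▸ hpos
      nlinarith [this, hW]
    rw [div_eq_div_iff (mul_pos hW hApos).ne' hden.ne']
    field_simp
    linear_combination (-((k:ℝ) * (a * a⁻¹ * 2 + a⁻¹)^H + 2*a*(k:ℝ)*(a * a⁻¹ * 2 + a⁻¹)^H)) * mul_inv_cancel₀ ha'
end
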